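/- Let ε > 0 and k ≥ 0. Define Ĥ(x,y,t) := -2∫_0^∞ Γ_{N-1}(x'-y', t/ε + kτ) ∂_{x_N}Γ_1(x_N + y_N + τ, t/ε) dτ and Ĝ(x,y,t) := G_0(x,y,t/ε) + Ĥ(x,y,t). Then for every x ∈ Ω̄ and t > 0, ∫_Ω Ĝ(x,y,t) dy = 1. -/

import Mathlib

open MeasureTheory Real

/-- The d-dimensional Gaussian heat kernel Γ_d(x,s). -/
noncomputable def heatKer (d : ℕ) (x : EuclideanSpace ℝ (Fin d)) (t : ℝ) : ℝ :=
  (4 * Real.pi * t) ^ (-(d : ℝ) / 2) * Real.exp (-‖x‖ ^ 2 / (4 * t))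

/-- The one-dimensional Gaussian heat kernel Γ_1(ξ,s). -/
noncomputable def heatKer1 (ξ t : ℝ) : ℝ :=
  (4 * Real.pi * t) ^ (-(1 : ℝ) / 2) * Real.exp (-ξ ^ 2 / (4 * t))

/-- ∂_ξ Γ_1(ξ,s) = -(ξ/(2s)) Γ_1(ξ,s). -/
noncomputable def dHeatKer1 (ξ t : ℝ) : ℝ := -(ξ / (2 * t)) * heatKer1 ξ t

/-- The half-space Dirichlet heat kernel in factored form, N = d + 1. -/
noncomputable def G0 (d : ℕ) (x' : EuclideanSpace ℝ (Fin d)) (xN : ℝ)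
    (y' : EuclideanSpace ℝ (Fin d)) (yN s : ℝ) : ℝ :=
  heatKer d (x' - y') s * (heatKer1 (xN - yN) s - heatKer1 (xN + yN) s)

/-- Ĥ(x,y,t) = -2∫_0^∞ Γ_{N-1}(x'-y', t/ε + kτ) ∂_{x_N}Γ_1(x_N+y_N+τ, t/ε) dτ. -/
noncomputable def Hhat (ε k : ℝ) (d : ℕ) (x' : EuclideanSpace ℝ (Fin d)) (xN : ℝ)
    (y' : EuclideanSpace ℝ (Fin d)) (yN t : ℝ) : ℝ :=
  -2 * ∫ τ in Set.Ioi (0 : ℝ),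
    heatKer d (x' - y') (t / ε + k * τ) * dHeatKer1 (xN + yN + τ) (t / ε)

/-- Ĝ(x,y,t) = G_0(x,y,t/ε) + Ĥ(x,y,t). -/
noncomputable def Ghat (ε k : ℝ) (d : ℕ) (x' : EuclideanSpace ℝ (Fin d)) (xN : ℝ)
    (y' : EuclideanSpace ℝ (Fin d)) (yN t : ℝ) : ℝ :=
  G0 d x' xN y' yN (t / ε) + Hhat ε k d x' xN y' yN t

open Set Filter

section GhatMassAux

lemma heatKer_nonneg {d : ℕ} (z : EuclideanSpace ℝ (Fin d)) {u : ℝ} (hu : 0 ≤ u) :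
    0 ≤ heatKer d z u := by
  unfold heatKer; positivity

lemma measurable_rpow_const (c : ℝ) : Measurable fun x : ℝ => x ^ c := by
  have hfe : (fun x : ℝ => x ^ c) = fun x =>
      if x = 0 then (if c = 0 then 1 else 0)
      else Real.exp (Real.log x * c) * (if x < 0 then Real.cos (c * π) else 1) := by
    funext x
    rcases lt_trichotomy x 0 with h | h | h
    · rw [Real.rpow_def_of_neg h, if_neg h.ne, if_pos h]
    · subst h
      rcases eq_or_ne c 0 with hc | hc
      · simp [hc]
      · simp [hc, Real.zero_rpow hc]
    · rw [Real.rpow_def_of_pos h, if_neg h.ne', if_neg (not_lt.mpr h.le), mul_one]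
  rw [hfe]
  have h0 : MeasurableSet {x : ℝ | x = 0} := measurableSet_eq
  have h1 : MeasurableSet {x : ℝ | x < 0} := measurableSet_Iio
  exact Measurable.ite h0 measurable_const
    ((Real.measurable_log.mul measurable_const).exp.mul
      (Measurable.ite h1 measurable_const measurable_const))

lemma heatKer1_pos {ξ s : ℝ} (hs : 0 < s) : 0 < heatKer1 ξ s := by
  unfold heatKer1; positivity

lemma hasDerivAt_heatKer1 {s : ℝ} (hs : 0 < s) (ξ : ℝ) :
    HasDerivAt (fun ξ => heatKer1 ξ s) (dHeatKer1 ξ s) ξ := by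
  have h1 : HasDerivAt (fun ξ : ℝ => -ξ ^ 2 / (4 * s)) (-(2 * ξ) / (4 * s)) ξ :=
    ((hasDerivAt_pow 2 ξ).neg.div_const (4 * s)).congr_deriv (by ring)
  have h2 := (h1.exp).const_mul ((4 * Real.pi * s) ^ (-(1:ℝ) / 2))
  refine h2.congr_deriv ?_
  unfold dHeatKer1 heatKer1
  field_simp
  ring

lemma tendsto_heatKer1_atTop {s : ℝ} (hs : 0 < s) {c : ℝ} :
    Tendsto (fun τ : ℝ => heatKer1 (c + τ) s) atTop (nhds 0) := by
  have h1 : Tendsto (fun τ : ℝ => -(c + τ) ^ 2 / (4 * s)) atTop atBot := by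
    apply Tendsto.atBot_div_const (by positivity)
    apply tendsto_neg_atTop_atBot.comp
    exact (tendsto_pow_atTop two_ne_zero).comp (tendsto_atTop_add_const_left _ c tendsto_id)
  have h2 := (Real.tendsto_exp_atBot.comp h1).const_mul ((4 * Real.pi * s) ^ (-(1:ℝ) / 2))
  simpa [heatKer1] using h2

lemma hasDerivAt_heatKer1_shift {s : ℝ} (hs : 0 < s) (c : ℝ) (x : ℝ) :
    HasDerivAt (fun τ => heatKer1 (c + τ) s) (dHeatKer1 (c + x) s) x := by
  have := (hasDerivAt_heatKer1 hs (c + x)).comp x ((hasDerivAt_id x).const_add c)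
  simpa [Function.comp_def] using this

lemma dHeatKer1_nonpos {s ξ : ℝ} (hs : 0 < s) (hξ : 0 ≤ ξ) : dHeatKer1 ξ s ≤ 0 := by
  unfold dHeatKer1
  have := (heatKer1_pos (ξ := ξ) hs).le
  have : 0 ≤ ξ / (2 * s) := by positivity
  nlinarith [(heatKer1_pos (ξ := ξ) hs).le]

lemma integral_Ioi_dHeatKer1 {s : ℝ} (hs : 0 < s) {c : ℝ} (hc : 0 ≤ c) :
    ∫ τ in Ioi (0:ℝ), dHeatKer1 (c + τ) s = -heatKer1 c s := by
  have key := integral_Ioi_of_hasDerivAt_of_nonneg' (a := 0) (l := 0)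
    (g := fun τ => -heatKer1 (c + τ) s) (g' := fun τ => -dHeatKer1 (c + τ) s)
    (fun x _ => (hasDerivAt_heatKer1_shift hs c x).neg)
    (fun x hx => by
      simpa using neg_nonneg.2 (dHeatKer1_nonpos hs (add_nonneg hc hx.out.le)))
    (by simpa using (tendsto_heatKer1_atTop hs (c := c)).neg)
  rw [integral_neg] at key
  simp only [add_zero] at key
  linarith [key]

lemma integrableOn_dHeatKer1 {s : ℝ} (hs : 0 < s) {c : ℝ} (hc : 0 ≤ c) :
    IntegrableOn (fun τ => dHeatKer1 (c + τ) s) (Ioi (0:ℝ)) := by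
  have key := integrableOn_Ioi_deriv_of_nonneg' (a := 0) (l := 0)
    (g := fun τ => -heatKer1 (c + τ) s) (g' := fun τ => -dHeatKer1 (c + τ) s)
    (fun x _ => (hasDerivAt_heatKer1_shift hs c x).neg)
    (fun x hx => by
      simpa using neg_nonneg.2 (dHeatKer1_nonpos hs (add_nonneg hc hx.out.le)))
    (by simpa using (tendsto_heatKer1_atTop hs (c := c)).neg)
  exact integrable_neg_iff.mp key

lemma integral_heatKer1 {s : ℝ} (hs : 0 < s) : ∫ ξ : ℝ, heatKer1 ξ s = 1 := by
  have h4 : (0:ℝ) < 4 * Real.pi * s := by positivity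
  have harg : ∀ ξ : ℝ, -ξ ^ 2 / (4 * s) = -(1 / (4 * s)) * ξ ^ 2 := fun ξ => by ring
  simp only [heatKer1, harg]
  rw [integral_const_mul, integral_gaussian]
  have hb : π / (1 / (4 * s)) = 4 * π * s := by field_simp
  rw [hb, Real.sqrt_eq_rpow, ← Real.rpow_add h4]
  norm_num

lemma integrable_heatKer1 {s : ℝ} (hs : 0 < s) : Integrable (fun ξ : ℝ => heatKer1 ξ s) := by
  have harg : ∀ ξ : ℝ, -ξ ^ 2 / (4 * s) = -(1 / (4 * s)) * ξ ^ 2 := fun ξ => by ring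
  simp only [heatKer1, harg]
  exact (integrable_exp_neg_mul_sq (by positivity)).const_mul _

lemma integral_heatKer {d : ℕ} {s : ℝ} (hs : 0 < s) :
    ∫ y : EuclideanSpace ℝ (Fin d), heatKer d y s = 1 := by
  have h4 : (0:ℝ) < 4 * Real.pi * s := by positivity
  have harg : ∀ y : EuclideanSpace ℝ (Fin d), -‖y‖ ^ 2 / (4 * s) = -(1 / (4 * s)) * ‖y‖ ^ 2 :=
    fun y => by ring
  simp only [heatKer, harg]
  rw [integral_const_mul, GaussianFourier.integral_rexp_neg_mul_sq_norm (by positivity)]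
  have hb : π / (1 / (4 * s)) = 4 * π * s := by field_simp
  rw [hb, finrank_euclideanSpace_fin, ← Real.rpow_add h4,
    show (-(d:ℝ)/2 + (d:ℝ)/2) = 0 by ring, Real.rpow_zero]

lemma integrable_heatKer {d : ℕ} {s : ℝ} (hs : 0 < s) :
    Integrable (fun y : EuclideanSpace ℝ (Fin d) => heatKer d y s) := by
  have harg : ∀ y : EuclideanSpace ℝ (Fin d), -‖y‖ ^ 2 / (4 * s) = -(1 / (4 * s)) * ‖y‖ ^ 2 :=
    fun y => by ring
  simp only [heatKer, harg]
  refine Integrable.const_mul ?_ _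
  have hb : (0:ℝ) < 1 / (4 * s) := by positivity
  have := (GaussianFourier.integrable_cexp_neg_mul_sq_norm_add
    (b := ((1 / (4 * s) : ℝ) : ℂ)) (by simpa using hb) 0
    (0 : EuclideanSpace ℝ (Fin d))).norm
  refine this.congr (Filter.Eventually.of_forall fun y => ?_)
  simp [Complex.norm_exp, ← Complex.ofReal_pow]

lemma integral_heatKer_sub {d : ℕ} {s : ℝ} (hs : 0 < s) (x' : EuclideanSpace ℝ (Fin d)) :
    ∫ y : EuclideanSpace ℝ (Fin d), heatKer d (x' - y) s = 1 := by
  rw [integral_sub_left_eq_self (fun y => heatKer d y s) volume x']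
  exact integral_heatKer hs

lemma integrable_heatKer_sub {d : ℕ} {s : ℝ} (hs : 0 < s) (x' : EuclideanSpace ℝ (Fin d)) :
    Integrable (fun y : EuclideanSpace ℝ (Fin d) => heatKer d (x' - y) s) :=
  (integrable_heatKer hs).comp_sub_left x'

lemma integral_Ioi_comp_add (f : ℝ → ℝ) (a b : ℝ) :
    ∫ x in Ioi b, f (a + x) = ∫ x in Ioi (a + b), f x := by
  have A : MeasurableEmbedding fun x : ℝ => a + x :=
    (Homeomorph.addLeft a).isClosedEmbedding.measurableEmbedding
  have := MeasurableEmbedding.setIntegral_map (μ := volume) A f (Ioi (a + b))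
  rw [map_add_left_eq_self volume a] at this
  rw [this]
  congr 1
  ext x
  simp [add_lt_add_iff_left]

lemma heatKer1_neg {s ξ : ℝ} : heatKer1 (-ξ) s = heatKer1 ξ s := by
  unfold heatKer1; rw [neg_pow, pow_two]; ring_nf

lemma integrableOn_heatKer1_shift {s : ℝ} (hs : 0 < s) (a : ℝ) (S : Set ℝ) :
    IntegrableOn (fun yN : ℝ => heatKer1 (a + yN) s) S := by
  exact ((integrable_heatKer1 hs).comp_add_left a).integrableOn

lemma integral_heatKer1_diff {s xN : ℝ} (hs : 0 < s) (hx : 0 ≤ xN) :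
    ∫ yN in Ioi (0:ℝ), (heatKer1 (xN - yN) s - heatKer1 (xN + yN) s)
      = 1 - 2 * ∫ ξ in Ioi xN, heatKer1 ξ s := by
  have hev : ∀ yN : ℝ, heatKer1 (xN - yN) s = heatKer1 (-xN + yN) s := by
    intro yN
    rw [show (xN - yN) = -(-xN + yN) by ring, heatKer1_neg]
  simp only [hev]
  rw [integral_sub (integrableOn_heatKer1_shift hs (-xN) _)
    (integrableOn_heatKer1_shift hs xN _)]
  rw [integral_Ioi_comp_add (fun ξ => heatKer1 ξ s) (-xN) 0,
      integral_Ioi_comp_add (fun ξ => heatKer1 ξ s) xN 0, add_zero, add_zero]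
  have hsplit : (∫ ξ in Iic (-xN), heatKer1 ξ s) + ∫ ξ in Ioi (-xN), heatKer1 ξ s
      = ∫ ξ : ℝ, heatKer1 ξ s :=
    intervalIntegral.integral_Iic_add_Ioi ((integrable_heatKer1 hs).integrableOn)
      ((integrable_heatKer1 hs).integrableOn)
  have hIic : (∫ ξ in Iic (-xN), heatKer1 ξ s) = ∫ ξ in Ioi xN, heatKer1 ξ s := by
    have h := integral_comp_neg_Iic (-xN) (fun ξ => heatKer1 ξ s)
    simp only [heatKer1_neg, neg_neg] at h
    exact h
  rw [integral_heatKer1 hs] at hsplit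
  rw [hIic] at hsplit
  linarith

lemma heatKer_le {d : ℕ} (z : EuclideanSpace ℝ (Fin d)) {s u : ℝ} (hs : 0 < s) (hsu : s ≤ u) :
    heatKer d z u ≤ (4 * Real.pi * s) ^ (-(d:ℝ) / 2) := by
  unfold heatKer
  have h1 : (4 * Real.pi * u) ^ (-(d:ℝ) / 2) ≤ (4 * Real.pi * s) ^ (-(d:ℝ) / 2) := by
    apply Real.rpow_le_rpow_of_nonpos (by positivity) (by nlinarith [Real.pi_pos])
    have : (0:ℝ) ≤ (d:ℝ) := Nat.cast_nonneg d
    linarith [div_nonneg this (by norm_num : (0:ℝ) ≤ 2)]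
  have hu : 0 < u := lt_of_lt_of_le hs hsu
  have h2 : Real.exp (-‖z‖ ^ 2 / (4 * u)) ≤ 1 := by
    rw [Real.exp_le_one_iff]
    have : 0 ≤ ‖z‖ ^ 2 / (4 * u) := div_nonneg (by positivity) (by linarith)
    rw [neg_div]
    linarith
  have hpos : (0:ℝ) ≤ (4 * Real.pi * u) ^ (-(d:ℝ) / 2) := by positivity
  calc (4 * Real.pi * u) ^ (-(d:ℝ) / 2) * Real.exp (-‖z‖ ^ 2 / (4 * u))
      ≤ (4 * Real.pi * u) ^ (-(d:ℝ) / 2) * 1 := by nlinarith [Real.exp_nonneg (-‖z‖ ^ 2 / (4 * u))]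
    _ ≤ (4 * Real.pi * s) ^ (-(d:ℝ) / 2) := by rw [mul_one]; exact h1

lemma measurable_heatKer1_gen {s : ℝ} {g : ℝ → ℝ} (hg : Measurable g) :
    Measurable fun τ : ℝ => heatKer1 (g τ) s := by
  unfold heatKer1
  exact (measurable_const.mul (((hg.pow_const 2).neg).div_const _).exp)

lemma measurable_dHeatKer1_gen {s : ℝ} {α : Type*} [MeasurableSpace α] {g : α → ℝ}
    (hg : Measurable g) : Measurable fun τ : α => dHeatKer1 (g τ) s := by
  unfold dHeatKer1 heatKer1
  exact ((hg.div_const _).neg).mul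
    (measurable_const.mul (((hg.pow_const 2).neg).div_const _).exp)

lemma measurable_heatKer_gen {d : ℕ} {α : Type*} [MeasurableSpace α]
    {z : α → EuclideanSpace ℝ (Fin d)} {u : α → ℝ} (hz : Measurable z) (hu : Measurable u) :
    Measurable fun a => heatKer d (z a) (u a) := by
  unfold heatKer
  exact ((measurable_rpow_const _).comp (measurable_const.mul hu)).mul
    (((hz.norm.pow_const 2).neg.div (measurable_const.mul hu)).exp)

lemma measurable_heatKer1_gen' {s : ℝ} {α : Type*} [MeasurableSpace α] {g : α → ℝ}
    (hg : Measurable g) : Measurable fun a : α => heatKer1 (g a) s := by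
  unfold heatKer1
  exact measurable_const.mul (((hg.pow_const 2).neg.div_const _).exp)

lemma key_mass (k : ℝ) (hk : 0 ≤ k) (d : ℕ) (x' : EuclideanSpace ℝ (Fin d)) (xN s : ℝ)
    (hxN : 0 ≤ xN) (hs : 0 < s) :
    (∫ y' : EuclideanSpace ℝ (Fin d), ∫ yN in Ioi (0:ℝ),
      (G0 d x' xN y' yN s
        + -2 * ∫ τ in Ioi (0:ℝ),
            heatKer d (x' - y') (s + k * τ) * dHeatKer1 (xN + yN + τ) s)) = 1 := by
  have hsk : ∀ τ : ℝ, 0 ≤ τ → 0 < s + k * τ := fun τ hτ =>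
    add_pos_of_pos_of_nonneg hs (mul_nonneg hk hτ)
  set C := (4 * Real.pi * s) ^ (-(d:ℝ)/2) with hCdef
  set M := ∫ ξ in Ioi xN, heatKer1 ξ s with hM
  -- Integrability of the (yN, τ) integrand, for each fixed y'
  have hf1 : ∀ y' : EuclideanSpace ℝ (Fin d),
      Integrable (Function.uncurry fun yN τ : ℝ =>
        heatKer d (x' - y') (s + k * τ) * dHeatKer1 (xN + yN + τ) s)
      ((volume.restrict (Ioi 0)).prod (volume.restrict (Ioi 0))) := by
    intro y'
    have hmeas : AEStronglyMeasurable (Function.uncurry fun yN τ : ℝ =>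
        heatKer d (x' - y') (s + k * τ) * dHeatKer1 (xN + yN + τ) s)
        ((volume.restrict (Ioi (0:ℝ))).prod (volume.restrict (Ioi (0:ℝ)))) := by
      apply Measurable.aestronglyMeasurable
      exact (measurable_heatKer_gen measurable_const
          (measurable_const.add (measurable_snd.const_mul k))).mul
        (measurable_dHeatKer1_gen ((measurable_fst.const_add xN).add measurable_snd))
    rw [integrable_prod_iff hmeas]
    constructor
    · filter_upwards [self_mem_ae_restrict measurableSet_Ioi] with yN hyN
      have hc : (0:ℝ) ≤ xN + yN := add_nonneg hxN hyN.out.le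
      apply Integrable.bdd_mul (c := C) (integrableOn_dHeatKer1 hs hc)
      · exact (measurable_heatKer_gen measurable_const
          (measurable_const.add (measurable_id.const_mul k))).aestronglyMeasurable
      · filter_upwards [self_mem_ae_restrict measurableSet_Ioi] with τ hτ
        rw [Real.norm_of_nonneg (heatKer_nonneg _ (hsk τ hτ.out.le).le)]
        exact heatKer_le _ hs (le_add_of_nonneg_right (mul_nonneg hk hτ.out.le))
    · apply Integrable.mono'
        ((integrableOn_heatKer1_shift hs xN (Ioi 0)).const_mul C)
        (hmeas.norm.integral_prod_right')
      filter_upwards [self_mem_ae_restrict measurableSet_Ioi] with yN hyN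
      have hc : (0:ℝ) ≤ xN + yN := add_nonneg hxN hyN.out.le
      rw [Real.norm_of_nonneg (integral_nonneg fun τ => norm_nonneg _)]
      have hle : ∀ᵐ τ ∂(volume.restrict (Ioi (0:ℝ))),
          ‖heatKer d (x' - y') (s + k * τ) * dHeatKer1 (xN + yN + τ) s‖
          ≤ C * -dHeatKer1 (xN + yN + τ) s := by
        filter_upwards [self_mem_ae_restrict measurableSet_Ioi] with τ hτ
        rw [norm_mul, Real.norm_of_nonneg (heatKer_nonneg _ (hsk τ hτ.out.le).le),
          Real.norm_of_nonpos (dHeatKer1_nonpos hs (add_nonneg hc hτ.out.le))]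
        apply mul_le_mul_of_nonneg_right
          (heatKer_le _ hs (le_add_of_nonneg_right (mul_nonneg hk hτ.out.le)))
        have := dHeatKer1_nonpos hs (add_nonneg hc hτ.out.le)
        linarith
      calc (∫ τ in Ioi (0:ℝ), ‖heatKer d (x' - y') (s + k * τ) * dHeatKer1 (xN + yN + τ) s‖)
          ≤ ∫ τ in Ioi (0:ℝ), C * -dHeatKer1 (xN + yN + τ) s := by
            apply integral_mono_of_nonneg (Filter.Eventually.of_forall fun τ => norm_nonneg _)
              (((integrableOn_dHeatKer1 hs hc).neg).const_mul C) hle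
        _ = C * heatKer1 (xN + yN) s := by
            rw [integral_const_mul, integral_neg, integral_Ioi_dHeatKer1 hs hc]; ring
  -- the inner double integral, swapped and evaluated, for each fixed y'
  have hinner : ∀ y' : EuclideanSpace ℝ (Fin d),
      (∫ yN in Ioi (0:ℝ), ∫ τ in Ioi (0:ℝ),
          heatKer d (x' - y') (s + k * τ) * dHeatKer1 (xN + yN + τ) s)
      = -∫ τ in Ioi (0:ℝ),
          heatKer d (x' - y') (s + k * τ) * heatKer1 (xN + τ) s := by
    intro y'
    rw [integral_integral_swap (hf1 y'), ← integral_neg]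
    apply integral_congr_ae
    filter_upwards [self_mem_ae_restrict measurableSet_Ioi] with τ hτ
    have harg : ∀ yN : ℝ, xN + yN + τ = (xN + τ) + yN := fun yN => by ring
    simp only [harg]
    rw [integral_const_mul, integral_Ioi_dHeatKer1 hs (add_nonneg hxN hτ.out.le)]
    ring
  -- integrability in yN of the two summands
  have hG0int : ∀ y' : EuclideanSpace ℝ (Fin d),
      IntegrableOn (fun yN => G0 d x' xN y' yN s) (Ioi (0:ℝ)) := by
    intro y'
    unfold G0
    refine Integrable.const_mul (Integrable.sub ?_ (integrableOn_heatKer1_shift hs xN _)) _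
    have heq : (fun yN : ℝ => heatKer1 (xN - yN) s) = fun yN => heatKer1 (-xN + yN) s := by
      funext yN; rw [show (xN - yN) = -(-xN + yN) by ring, heatKer1_neg]
    rw [heq]; exact integrableOn_heatKer1_shift hs (-xN) _
  have hHint : ∀ y' : EuclideanSpace ℝ (Fin d),
      IntegrableOn (fun yN => -2 * ∫ τ in Ioi (0:ℝ),
        heatKer d (x' - y') (s + k * τ) * dHeatKer1 (xN + yN + τ) s) (Ioi (0:ℝ)) :=
    fun y' => ((hf1 y').integral_prod_left).const_mul _
  -- the inner yN-integral, evaluated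
  have hsum : ∀ y' : EuclideanSpace ℝ (Fin d),
      (∫ yN in Ioi (0:ℝ), (G0 d x' xN y' yN s
        + -2 * ∫ τ in Ioi (0:ℝ),
            heatKer d (x' - y') (s + k * τ) * dHeatKer1 (xN + yN + τ) s))
      = heatKer d (x' - y') s * (1 - 2 * M)
        + 2 * ∫ τ in Ioi (0:ℝ),
            heatKer d (x' - y') (s + k * τ) * heatKer1 (xN + τ) s := by
    intro y'
    rw [integral_add (hG0int y') (hHint y')]
    congr 1
    · unfold G0
      rw [integral_const_mul, integral_heatKer1_diff hs hxN]
    · rw [integral_const_mul, hinner y']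
      ring
  rw [integral_congr_ae (Filter.Eventually.of_forall hsum)]
  -- integrability of the (y', τ) integrand
  have hf2 : Integrable (Function.uncurry fun (y' : EuclideanSpace ℝ (Fin d)) (τ : ℝ) =>
      heatKer d (x' - y') (s + k * τ) * heatKer1 (xN + τ) s)
      (volume.prod (volume.restrict (Ioi 0))) := by
    have hmeas : AEStronglyMeasurable (Function.uncurry fun (y' : EuclideanSpace ℝ (Fin d)) (τ : ℝ) =>
        heatKer d (x' - y') (s + k * τ) * heatKer1 (xN + τ) s)
        ((volume : Measure (EuclideanSpace ℝ (Fin d))).prod (volume.restrict (Ioi (0:ℝ)))) := by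
      apply Measurable.aestronglyMeasurable
      exact (measurable_heatKer_gen (measurable_const.sub measurable_fst)
          (measurable_const.add (measurable_snd.const_mul k))).mul
        (measurable_heatKer1_gen' (measurable_snd.const_add xN))
    rw [integrable_prod_iff' hmeas]
    constructor
    · filter_upwards [self_mem_ae_restrict measurableSet_Ioi] with τ hτ
      exact (integrable_heatKer_sub (hsk τ hτ.out.le) x').mul_const (heatKer1 (xN + τ) s)
    · apply Integrable.congr (integrableOn_heatKer1_shift hs xN (Ioi 0))
      filter_upwards [self_mem_ae_restrict measurableSet_Ioi] with τ hτ
      have hnn : ∀ y' : EuclideanSpace ℝ (Fin d),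
          ‖heatKer d (x' - y') (s + k * τ) * heatKer1 (xN + τ) s‖
          = heatKer d (x' - y') (s + k * τ) * heatKer1 (xN + τ) s := fun y'' =>
        Real.norm_of_nonneg (mul_nonneg (heatKer_nonneg _ (hsk τ hτ.out.le).le)
          (heatKer1_pos hs).le)
      simp only [Function.uncurry, hnn]
      rw [integral_mul_const, integral_heatKer_sub (hsk τ hτ.out.le) x', one_mul]
  -- split and evaluate the outer y'-integral
  have hP : Integrable (fun y' : EuclideanSpace ℝ (Fin d) =>
      heatKer d (x' - y') s * (1 - 2 * M)) volume :=
    (integrable_heatKer_sub hs x').mul_const _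
  have hQ : Integrable (fun y' : EuclideanSpace ℝ (Fin d) => 2 * ∫ τ in Ioi (0:ℝ),
      heatKer d (x' - y') (s + k * τ) * heatKer1 (xN + τ) s) volume := by
    have h := hf2.integral_prod_left
    simp only [Function.uncurry_apply_pair] at h
    exact h.const_mul 2
  rw [integral_add hP hQ]
  have h1 : (∫ y' : EuclideanSpace ℝ (Fin d), heatKer d (x' - y') s * (1 - 2 * M))
      = 1 - 2 * M := by
    rw [integral_mul_const, integral_heatKer_sub hs x', one_mul]
  have h2 : (∫ y' : EuclideanSpace ℝ (Fin d), 2 * ∫ τ in Ioi (0:ℝ),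
      heatKer d (x' - y') (s + k * τ) * heatKer1 (xN + τ) s) = 2 * M := by
    rw [integral_const_mul, integral_integral_swap hf2]
    have : (∫ τ in Ioi (0:ℝ), ∫ y' : EuclideanSpace ℝ (Fin d),
        heatKer d (x' - y') (s + k * τ) * heatKer1 (xN + τ) s) = M := by
      have hshift := integral_Ioi_comp_add (fun ξ => heatKer1 ξ s) xN 0
      rw [add_zero] at hshift
      rw [hM, ← hshift]
      apply integral_congr_ae
      filter_upwards [self_mem_ae_restrict measurableSet_Ioi] with τ hτ
      rw [integral_mul_const, integral_heatKer_sub (hsk τ hτ.out.le) x', one_mul]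
    rw [this]
  rw [h1, h2]
  ring

end GhatMassAux

/-- Total mass of the diffusive-Neumann kernel: ∫_Ω Ĝ(x,y,t) dy = 1. -/
theorem Ghat_mass (ε k : ℝ) (hε : 0 < ε) (hk : 0 ≤ k) (d : ℕ) (hd : 1 ≤ d)
    (x' : EuclideanSpace ℝ (Fin d)) (xN t : ℝ) (hxN : 0 ≤ xN) (ht : 0 < t) :
    (∫ y' : EuclideanSpace ℝ (Fin d), ∫ yN in Set.Ioi (0 : ℝ),
        Ghat ε k d x' xN y' yN t) = 1 := by
  have hs : 0 < t / ε := div_pos ht hε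
  have h := key_mass k hk d x' xN (t / ε) hxN hs
  simp only [Ghat, Hhat]
  exact h
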